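/- arXiv:2401.15941 — 4 statements merged into one kernel-verified Lean document; each statement's English description precedes it below -/
import Mathlib

section
/- The block iteration matrix A is an M-matrix: A is invertible and every entry of its inverse A⁻¹ is nonnegative. -/
open Matrix

/-- Minimum principle: if `B` has nonpositive off-diagonal entries and strictly
positive row sums, then any solution of `B *ᵥ x = b` with `b ≥ 0` satisfies `x ≥ 0`. -/
lemma maxprinc {n : Type*} [Fintype n] [DecidableEq n]
    (B : Matrix n n ℝ) (hoff : ∀ i j, i ≠ j → B i j ≤ 0)
    (hrow : ∀ i, 0 < ∑ j, B i j)
    (x : n → ℝ) (hb : ∀ i, 0 ≤ (B *ᵥ x) i) : ∀ i, 0 ≤ x i := by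
  by_contra h
  push_neg at h
  obtain ⟨i₁, hi₁⟩ := h
  obtain ⟨i, -, hmin⟩ := Finset.exists_min_image Finset.univ x ⟨i₁, Finset.mem_univ i₁⟩
  have hxi : x i < 0 := lt_of_le_of_lt (hmin i₁ (Finset.mem_univ i₁)) hi₁
  have key : (B *ᵥ x) i ≤ x i * ∑ j, B i j := by
    rw [Finset.mul_sum, Matrix.mulVec, dotProduct]
    apply Finset.sum_le_sum
    intro j _
    rcases eq_or_ne i j with rfl | hij
    · exact le_of_eq (mul_comm _ _)
    · rw [mul_comm (x i)]
      exact mul_le_mul_of_nonpos_left (hmin j (Finset.mem_univ j)) (hoff i j hij)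
  have : x i * ∑ j, B i j < 0 := mul_neg_of_neg_of_pos hxi (hrow i)
  exact absurd (hb i) (not_le.mpr (lt_of_le_of_lt key this))

/-- A matrix with nonpositive off-diagonal entries and strictly positive row sums
is invertible with entrywise nonnegative inverse. -/
lemma Mmatrix {n : Type*} [Fintype n] [DecidableEq n]
    (B : Matrix n n ℝ) (hoff : ∀ i j, i ≠ j → B i j ≤ 0)
    (hrow : ∀ i, 0 < ∑ j, B i j) :
    IsUnit B ∧ ∀ i j, 0 ≤ B⁻¹ i j := by
  have hunit : IsUnit B := by
    rw [← Matrix.mulVec_injective_iff_isUnit, ← Matrix.coe_mulVecLin,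
      injective_iff_map_eq_zero' (Matrix.mulVecLin B)]
    intro x
    constructor
    · intro hx
      have h1 : ∀ i, 0 ≤ x i := maxprinc B hoff hrow x (by simp [show B *ᵥ x = 0 from hx])
      have h2 : ∀ i, 0 ≤ (-x) i := by
        refine maxprinc B hoff hrow (-x) ?_
        simp [Matrix.mulVec_neg, show B *ᵥ x = 0 from hx]
      funext i
      exact le_antisymm (by simpa using h2 i) (h1 i)
    · rintro rfl; simp
  refine ⟨hunit, fun i j => ?_⟩
  have hBB : B * B⁻¹ = 1 := Matrix.mul_nonsing_inv B (Matrix.isUnit_iff_isUnit_det B |>.mp hunit)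
  have := maxprinc B hoff hrow (fun i => B⁻¹ i j) ?_ i
  · exact this
  · intro k
    have : B *ᵥ (fun i => B⁻¹ i j) = fun k => (B * B⁻¹) k j := by
      ext k; simp [Matrix.mulVec, Matrix.mul_apply, dotProduct]
    rw [this, hBB]
    by_cases h : k = j <;> simp [Matrix.one_apply, h]

/-- Theorem 3.1: the Picard-iteration block matrix `A` for piecewise-constant `Q⁰`
finite elements is an M-matrix: it is invertible and its inverse is entrywise
nonnegative. -/
theorem block_iteration_matrix_is_M_matrix
    (N : ℕ) (hN : 1 ≤ N) (Δt a α₀ β₀ : ℝ)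
    (hΔt : 0 < Δt) (ha : 0 < a) (hα₀ : 0 < α₀) (hβ₀ : 0 < β₀)
    (m lam z : Fin N → ℝ)
    (hm : ∀ i, 0 < m i) (hlam : ∀ i, 0 ≤ lam i) (hz : ∀ i, 0 ≤ z i)
    (L : Matrix (Fin N) (Fin N) ℝ)
    (hLdiag : ∀ j, 0 ≤ L j j)
    (hLoff : ∀ j k, j ≠ k → L j k ≤ 0)
    (hLdom : ∀ j, ∑ k ∈ Finset.univ.erase j, |L j k| ≤ L j j)
    (A : Matrix (Fin N ⊕ Fin N) (Fin N ⊕ Fin N) ℝ)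
    (hA : A = Matrix.fromBlocks
      ((1/Δt) • Matrix.diagonal m + (a * α₀) • L + a • Matrix.diagonal lam)
      (-(a • Matrix.diagonal lam))
      (-(a • Matrix.diagonal z))
      ((1/Δt) • Matrix.diagonal m + (a * β₀) • L + a • Matrix.diagonal z)) :
    IsUnit A ∧ ∀ i j, 0 ≤ A⁻¹ i j := by
  -- row sums of L are nonnegative
  have hLrow : ∀ j, 0 ≤ ∑ k, L j k := by
    intro j
    rw [← Finset.add_sum_erase _ _ (Finset.mem_univ j)]
    have hd := hLdom j
    rw [Finset.sum_congr rfl (fun k hk =>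
      abs_of_nonpos (hLoff j k (Finset.ne_of_mem_erase hk).symm)),
      Finset.sum_neg_distrib] at hd
    linarith
  apply Mmatrix
  · rintro (i | i) (j | j) hij <;> subst hA <;>
      simp only [Matrix.fromBlocks_apply₁₁, Matrix.fromBlocks_apply₁₂,
        Matrix.fromBlocks_apply₂₁, Matrix.fromBlocks_apply₂₂,
        Matrix.add_apply, Matrix.smul_apply, Matrix.neg_apply, smul_eq_mul]
    · have hij' : i ≠ j := by simpa using hij
      rw [Matrix.diagonal_apply_ne _ hij', Matrix.diagonal_apply_ne _ hij']
      nlinarith [hLoff i j hij', mul_pos ha hα₀]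
    · rcases eq_or_ne i j with rfl | h
      · rw [Matrix.diagonal_apply_eq]
        nlinarith [hlam i]
      · rw [Matrix.diagonal_apply_ne _ h]; simp
    · rcases eq_or_ne i j with rfl | h
      · rw [Matrix.diagonal_apply_eq]
        nlinarith [hz i]
      · rw [Matrix.diagonal_apply_ne _ h]; simp
    · have hij' : i ≠ j := by simpa using hij
      rw [Matrix.diagonal_apply_ne _ hij', Matrix.diagonal_apply_ne _ hij']
      nlinarith [hLoff i j hij', mul_pos ha hβ₀]
  · rintro (j | j) <;> subst hA <;>
      rw [Fintype.sum_sum_type] <;>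
      simp only [Matrix.fromBlocks_apply₁₁, Matrix.fromBlocks_apply₁₂,
        Matrix.fromBlocks_apply₂₁, Matrix.fromBlocks_apply₂₂,
        Matrix.add_apply, Matrix.smul_apply, Matrix.neg_apply, smul_eq_mul,
        Finset.sum_add_distrib, Finset.sum_neg_distrib, ← Finset.mul_sum]
    · have hdm : ∑ i, Matrix.diagonal m j i = m j := by
        rw [Finset.sum_eq_single j (fun k _ hk => Matrix.diagonal_apply_ne m (Ne.symm hk))
          (by simp), Matrix.diagonal_apply_eq]
      rw [hdm]
      have h1 : 0 < 1/Δt * m j := mul_pos (by positivity) (hm j)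
      have h2 : 0 ≤ a * α₀ * ∑ k, L j k :=
        mul_nonneg (mul_nonneg ha.le hα₀.le) (hLrow j)
      linarith
    · have hdm : ∑ i, Matrix.diagonal m j i = m j := by
        rw [Finset.sum_eq_single j (fun k _ hk => Matrix.diagonal_apply_ne m (Ne.symm hk))
          (by simp), Matrix.diagonal_apply_eq]
      rw [hdm]
      have h1 : 0 < 1/Δt * m j := mul_pos (by positivity) (hm j)
      have h2 : 0 ≤ a * β₀ * ∑ k, L j k :=
        mul_nonneg (mul_nonneg ha.le hβ₀.le) (hLrow j)
      linarith
end

section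
/- If F is a vector in ℝ^(2N) with all entries nonnegative, then the unique solution U of the linear system A · U = F has all entries nonnegative. -/
open Matrix

/-- Key lemma: strictly diagonally dominant matrix with nonpositive off-diagonal
entries maps nonnegative solutions. -/
lemma mmatrix_nonneg {n : Type*} [Fintype n] [DecidableEq n]
    (B : Matrix n n ℝ)
    (hoff : ∀ i j, i ≠ j → B i j ≤ 0)
    (hdom : ∀ i, ∑ j ∈ Finset.univ.erase i, |B i j| < B i i)
    (U F : n → ℝ) (hU : B.mulVec U = F) (hF : ∀ i, 0 ≤ F i) :
    ∀ i, 0 ≤ U i := by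
  by_contra h
  push_neg at h
  obtain ⟨i0, hi0⟩ := h
  obtain ⟨i, -, hi⟩ := Finset.exists_min_image Finset.univ U ⟨i0, Finset.mem_univ _⟩
  have hUi : U i < 0 := lt_of_le_of_lt (hi i0 (Finset.mem_univ _)) hi0
  have hFi : 0 ≤ B.mulVec U i := hU ▸ hF i
  have hexp : B.mulVec U i = B i i * U i + ∑ j ∈ Finset.univ.erase i, B i j * U j := by
    rw [Matrix.mulVec, dotProduct, ← Finset.add_sum_erase _ _ (Finset.mem_univ i)]
  have hbound : ∑ j ∈ Finset.univ.erase i, B i j * U j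
      ≤ ∑ j ∈ Finset.univ.erase i, (-|B i j|) * U i := by
    apply Finset.sum_le_sum
    intro j hj
    have hji : j ≠ i := Finset.ne_of_mem_erase hj
    have h1 : B i j ≤ 0 := hoff i j hji.symm
    rw [abs_of_nonpos h1, neg_neg]
    exact mul_le_mul_of_nonpos_left (hi j (Finset.mem_univ _)) h1
  have hsum : ∑ j ∈ Finset.univ.erase i, (-|B i j|) * U i
      = -(∑ j ∈ Finset.univ.erase i, |B i j|) * U i := by
    rw [← Finset.sum_mul, ← Finset.sum_neg_distrib]
  have hdomi := hdom i
  nlinarith [hexp ▸ hFi]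

/-- Positivity preservation of the first-order `Q⁰` scheme: if the right-hand side
`F` is entrywise nonnegative, then the linear system `A · U = F` has a unique
solution and any solution is entrywise nonnegative. -/
theorem block_iteration_positivity_preserving
    (N : ℕ) (hN : 1 ≤ N) (Δt a α₀ β₀ : ℝ)
    (hΔt : 0 < Δt) (ha : 0 < a) (hα₀ : 0 < α₀) (hβ₀ : 0 < β₀)
    (m lam z : Fin N → ℝ)
    (hm : ∀ i, 0 < m i) (hlam : ∀ i, 0 ≤ lam i) (hz : ∀ i, 0 ≤ z i)
    (L : Matrix (Fin N) (Fin N) ℝ)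
    (hLdiag : ∀ j, 0 ≤ L j j)
    (hLoff : ∀ j k, j ≠ k → L j k ≤ 0)
    (hLdom : ∀ j, ∑ k ∈ Finset.univ.erase j, |L j k| ≤ L j j)
    (A : Matrix (Fin N ⊕ Fin N) (Fin N ⊕ Fin N) ℝ)
    (hA : A = Matrix.fromBlocks
      ((1/Δt) • Matrix.diagonal m + (a * α₀) • L + a • Matrix.diagonal lam)
      (-(a • Matrix.diagonal lam))
      (-(a • Matrix.diagonal z))
      ((1/Δt) • Matrix.diagonal m + (a * β₀) • L + a • Matrix.diagonal z))
    (F : (Fin N ⊕ Fin N) → ℝ) (hF : ∀ i, 0 ≤ F i) :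
    (∃! U : (Fin N ⊕ Fin N) → ℝ, A.mulVec U = F) ∧
    ∀ U : (Fin N ⊕ Fin N) → ℝ, A.mulVec U = F → ∀ i, 0 ≤ U i := by
  -- off-diagonal nonpositivity
  have hoff : ∀ i j, i ≠ j → A i j ≤ 0 := by
    intro i j hij
    subst hA
    rcases i with j'|j' <;> rcases j with k|k <;>
      simp only [Matrix.fromBlocks_apply₁₁, Matrix.fromBlocks_apply₁₂,
        Matrix.fromBlocks_apply₂₁, Matrix.fromBlocks_apply₂₂,
        Matrix.add_apply, Matrix.smul_apply, Matrix.neg_apply,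
        Matrix.diagonal_apply, smul_eq_mul]
    · have hne : j' ≠ k := by intro h; exact hij (by rw [h])
      simp only [if_neg hne]
      nlinarith [mul_nonpos_of_nonneg_of_nonpos (mul_pos ha hα₀).le (hLoff j' k hne)]
    · split <;> nlinarith [hlam j']
    · split <;> nlinarith [hz j']
    · have hne : j' ≠ k := by intro h; exact hij (by rw [h])
      simp only [if_neg hne]
      nlinarith [mul_nonpos_of_nonneg_of_nonpos (mul_pos ha hβ₀).le (hLoff j' k hne)]
  -- diagonal dominance
  have hdom : ∀ i, ∑ k ∈ Finset.univ.erase i, |A i k| < A i i := by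
    intro i
    have hsplit : ∑ k ∈ Finset.univ.erase i, |A i k|
        = (∑ k : Fin N, |A i (Sum.inl k)|) + (∑ k : Fin N, |A i (Sum.inr k)|) - |A i i| := by
      rw [Finset.sum_erase_eq_sub (Finset.mem_univ i), Fintype.sum_sum_type]
    rw [hsplit]
    subst hA
    rcases i with j|j
    · have h1 : ∑ k : Fin N, |Matrix.fromBlocks
          ((1/Δt) • Matrix.diagonal m + (a * α₀) • L + a • Matrix.diagonal lam)
          (-(a • Matrix.diagonal lam)) (-(a • Matrix.diagonal z))
          ((1/Δt) • Matrix.diagonal m + (a * β₀) • L + a • Matrix.diagonal z)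
          (Sum.inl j) (Sum.inr k)| = a * lam j := by
        rw [Finset.sum_eq_single j]
        · simp [abs_of_nonpos, mul_nonneg ha.le (hlam j), abs_of_nonneg,
            mul_nonneg ha.le (hlam j)]
        · intro k _ hk
          simp [Matrix.diagonal_apply, (Ne.symm hk : j ≠ k)]
        · simp
      rw [h1]
      have h2 : ∑ k : Fin N, |Matrix.fromBlocks
          ((1/Δt) • Matrix.diagonal m + (a * α₀) • L + a • Matrix.diagonal lam)
          (-(a • Matrix.diagonal lam)) (-(a • Matrix.diagonal z))
          ((1/Δt) • Matrix.diagonal m + (a * β₀) • L + a • Matrix.diagonal z)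
          (Sum.inl j) (Sum.inl k)|
          = |1/Δt * m j + a * α₀ * L j j + a * lam j|
            + ∑ k ∈ Finset.univ.erase j, (a * α₀) * |L j k| := by
        rw [← Finset.add_sum_erase _ _ (Finset.mem_univ j)]
        congr 1
        · simp [Matrix.diagonal_apply]
        · apply Finset.sum_congr rfl
          intro k hk
          have hkj : j ≠ k := fun h => (Finset.ne_of_mem_erase hk) h.symm
          simp [Matrix.diagonal_apply, hkj, abs_mul,
            abs_of_pos (mul_pos ha hα₀)]
      rw [h2]
      have hdiag : Matrix.fromBlocks
          ((1/Δt) • Matrix.diagonal m + (a * α₀) • L + a • Matrix.diagonal lam)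
          (-(a • Matrix.diagonal lam)) (-(a • Matrix.diagonal z))
          ((1/Δt) • Matrix.diagonal m + (a * β₀) • L + a • Matrix.diagonal z)
          (Sum.inl j) (Sum.inl j) = 1/Δt * m j + a * α₀ * L j j + a * lam j := by
        simp [Matrix.diagonal_apply]
      rw [hdiag, ← Finset.mul_sum]
      have hd : 0 < 1/Δt * m j + a * α₀ * L j j + a * lam j := by
        have h3 : 0 < 1/Δt * m j := mul_pos (by positivity) (hm j)
        nlinarith [mul_nonneg (mul_pos ha hα₀).le (hLdiag j), mul_nonneg ha.le (hlam j)]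
      rw [abs_of_pos hd]
      have h4 := mul_le_mul_of_nonneg_left (hLdom j) (mul_pos ha hα₀).le
      have h3 : 0 < 1/Δt * m j := mul_pos (by positivity) (hm j)
      linarith
    · have h1 : ∑ k : Fin N, |Matrix.fromBlocks
          ((1/Δt) • Matrix.diagonal m + (a * α₀) • L + a • Matrix.diagonal lam)
          (-(a • Matrix.diagonal lam)) (-(a • Matrix.diagonal z))
          ((1/Δt) • Matrix.diagonal m + (a * β₀) • L + a • Matrix.diagonal z)
          (Sum.inr j) (Sum.inl k)| = a * z j := by
        rw [Finset.sum_eq_single j]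
        · simp [abs_of_nonpos, mul_nonneg ha.le (hz j), abs_of_nonneg,
            mul_nonneg ha.le (hz j)]
        · intro k _ hk
          simp [Matrix.diagonal_apply, (Ne.symm hk : j ≠ k)]
        · simp
      rw [h1]
      have h2 : ∑ k : Fin N, |Matrix.fromBlocks
          ((1/Δt) • Matrix.diagonal m + (a * α₀) • L + a • Matrix.diagonal lam)
          (-(a • Matrix.diagonal lam)) (-(a • Matrix.diagonal z))
          ((1/Δt) • Matrix.diagonal m + (a * β₀) • L + a • Matrix.diagonal z)
          (Sum.inr j) (Sum.inr k)|
          = |1/Δt * m j + a * β₀ * L j j + a * z j|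
            + ∑ k ∈ Finset.univ.erase j, (a * β₀) * |L j k| := by
        rw [← Finset.add_sum_erase _ _ (Finset.mem_univ j)]
        congr 1
        · simp [Matrix.diagonal_apply]
        · apply Finset.sum_congr rfl
          intro k hk
          have hkj : j ≠ k := fun h => (Finset.ne_of_mem_erase hk) h.symm
          simp [Matrix.diagonal_apply, hkj, abs_mul,
            abs_of_pos (mul_pos ha hβ₀)]
      rw [h2]
      have hdiag : Matrix.fromBlocks
          ((1/Δt) • Matrix.diagonal m + (a * α₀) • L + a • Matrix.diagonal lam)
          (-(a • Matrix.diagonal lam)) (-(a • Matrix.diagonal z))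
          ((1/Δt) • Matrix.diagonal m + (a * β₀) • L + a • Matrix.diagonal z)
          (Sum.inr j) (Sum.inr j) = 1/Δt * m j + a * β₀ * L j j + a * z j := by
        simp [Matrix.diagonal_apply]
      rw [hdiag, ← Finset.mul_sum]
      have hd : 0 < 1/Δt * m j + a * β₀ * L j j + a * z j := by
        have h3 : 0 < 1/Δt * m j := mul_pos (by positivity) (hm j)
        nlinarith [mul_nonneg (mul_pos ha hβ₀).le (hLdiag j), mul_nonneg ha.le (hz j)]
      rw [abs_of_pos hd]
      have h4 := mul_le_mul_of_nonneg_left (hLdom j) (mul_pos ha hβ₀).le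
      have h3 : 0 < 1/Δt * m j := mul_pos (by positivity) (hm j)
      linarith
  -- conclusion
  have hpos := fun U hU => mmatrix_nonneg A hoff hdom U F hU hF
  have hinj : Function.Injective A.mulVecLin := by
    intro V W h
    have hVW : A.mulVec (V - W) = 0 := by
      rw [Matrix.mulVec_sub]
      simp only [Matrix.mulVecLin_apply] at h
      rw [h, sub_self]
    have hWV : A.mulVec (W - V) = 0 := by
      rw [Matrix.mulVec_sub]
      simp only [Matrix.mulVecLin_apply] at h
      rw [h, sub_self]
    have h1 := mmatrix_nonneg A hoff hdom (V - W) 0 hVW (fun _ => le_refl 0)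
    have h2 := mmatrix_nonneg A hoff hdom (W - V) 0 hWV (fun _ => le_refl 0)
    funext i
    have := h1 i
    have := h2 i
    simp only [Pi.sub_apply] at *
    linarith
  have hsurj : Function.Surjective A.mulVecLin :=
    (LinearMap.injective_iff_surjective).1 hinj
  obtain ⟨U, hUF⟩ := hsurj F
  simp only [Matrix.mulVecLin_apply] at hUF
  refine ⟨⟨U, hUF, fun V hV => ?_⟩, hpos⟩
  exact hinj (by simp only [Matrix.mulVecLin_apply]; rw [hV, hUF])
end

section
/- Let h_x, h_y > 0, (x_i, y_j) ∈ ℝ², and real numbers m, ū with ū ≥ m. Define p(x,y) = ū + 2(ū − m)·(x − x_i)/h_x on the rectangle R = [x_i − h_x/2, x_i + h_x/2] × [y_j − h_y/2, y_j + h_y/2]. Then: (i) the mean value of p over R equals ū; (ii) p(x,y) = m for every point with x = x_i − h_x/2; and (iii) p(x,y) ≥ m for every (x,y) ∈ R. -/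
/-!
The replacement is affine in `x` with slope `2(ū - m)/h_x`, centred at `x_i`. Being odd about
the centre, the linear part integrates to zero over the cell, so the mean is `ū`; and
`p - m = 2(ū - m)/h_x · (x - (x_i - h_x/2))` vanishes on the left edge and is a product of two
nonnegative factors on the cell.
-/

theorem intervalIntegral_affine_centered (a b c r : ℝ) :
    ∫ x in (c - r)..(c + r), a + b * (x - c) = 2 * r * a := by
  rw [intervalIntegral.integral_comp_sub_right (fun x => a + b * x) c]
  simp only [sub_sub_cancel_left, add_sub_cancel_left]
  rw [intervalIntegral.integral_add intervalIntegrable_const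
      ((continuous_const_mul b).intervalIntegrable _ _),
    intervalIntegral.integral_const_mul, integral_id, intervalIntegral.integral_const,
    smul_eq_mul]
  ring

theorem limiter_sub_lowerBound_eq {hx : ℝ} (hhx : hx ≠ 0) (xi m ubar x : ℝ) :
    ubar + 2 * (ubar - m) * (x - xi) / hx - m
      = 2 * (ubar - m) / hx * (x - (xi - hx / 2)) := by
  field_simp
  ring

/-- The 2D positivity-preserving limiter replacement
`p(x,y) = ū + 2(ū − m)·(x − x_i)/h_x` preserves the cell average `ū`, equals `m`
on the edge `x = x_i − h_x/2`, and is bounded below by `m` on the whole cell,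
whenever `ū ≥ m`. -/
theorem pp_limiter_2d_edge (hx hy xi yj m ubar : ℝ)
    (hhx : 0 < hx) (hhy : 0 < hy) (hm : m ≤ ubar)
    (p : ℝ → ℝ → ℝ)
    (hp : ∀ x y, p x y = ubar + 2*(ubar - m)*(x - xi)/hx) :
    ((1/(hx*hy)) *
      ∫ x in (xi - hx/2)..(xi + hx/2), ∫ y in (yj - hy/2)..(yj + hy/2), p x y)
      = ubar ∧
    (∀ y : ℝ, p (xi - hx/2) y = m) ∧
    ∀ x ∈ Set.Icc (xi - hx/2) (xi + hx/2), ∀ y ∈ Set.Icc (yj - hy/2) (yj + hy/2),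
      m ≤ p x y := by
  have hp_affine : ∀ x y, p x y = ubar + 2 * (ubar - m) / hx * (x - xi) := fun x y => by
    rw [hp, mul_div_right_comm]
  refine ⟨?_, fun y => ?_, fun x hxcell y _ => ?_⟩
  · have hinner : ∀ x, ∫ y in (yj - hy/2)..(yj + hy/2), p x y
        = hy * (ubar + 2 * (ubar - m) / hx * (x - xi)) := fun x => by
      simp only [hp_affine, intervalIntegral.integral_const, smul_eq_mul]
      ring
    simp only [hinner, intervalIntegral.integral_const_mul, intervalIntegral_affine_centered]
    field_simp
  · have h := limiter_sub_lowerBound_eq hhx.ne' xi m ubar (xi - hx / 2)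
    rw [sub_self, mul_zero, sub_eq_zero] at h
    rw [hp, h]
  · have h := limiter_sub_lowerBound_eq hhx.ne' xi m ubar x
    have hnonneg : 0 ≤ 2 * (ubar - m) / hx * (x - (xi - hx / 2)) :=
      mul_nonneg (div_nonneg (by linarith) hhx.le) (by linarith [hxcell.1])
    rw [hp]
    linarith
end

section
/- Let h_x, h_y > 0, (x_i, y_j) ∈ ℝ², real numbers m, ū with ū ≥ m, and a real number c. Define p(x,y) = ū + (ū − m + c/2)·(x − x_i)/h_x + (ū − m − c/2)·(y − y_j)/h_y on the rectangle R = [x_i − h_x/2, x_i + h_x/2] × [y_j − h_y/2, y_j + h_y/2]. Then: (i) the mean value of p over R equals ū; (ii) p(x_i − h_x/2, y_j − h_y/2) = m; (iii) p(x_i + h_x/2, y_j − h_y/2) − p(x_i − h_x/2, y_j + h_y/2) = c; and (iv) if moreover |c| ≤ 2(ū − m), then p(x,y) ≥ m for every (x,y) ∈ R. -/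
lemma int_affine (d e a b : ℝ) :
    ∫ t in a..b, (d + e*t) = d*(b-a) + e*(b^2-a^2)/2 := by
  rw [intervalIntegral.integral_add intervalIntegrable_const
      (intervalIntegral.intervalIntegrable_id.const_mul e),
    intervalIntegral.integral_const, intervalIntegral.integral_const_mul,
    integral_id]
  simp only [smul_eq_mul]
  ring

/-- The 2D positivity-preserving limiter replacement
`p(x,y) = ū + (ū − m + c/2)·(x − x_i)/h_x + (ū − m − c/2)·(y − y_j)/h_y`
preserves the cell average `ū`, sets the corner value at
`(x_i − h_x/2, y_j − h_y/2)` to `m`, preserves the difference `c` of the two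
off-diagonal corner values, and, if `|c| ≤ 2(ū − m)`, is bounded below by `m`
on the whole cell. -/
theorem pp_limiter_2d_corner (hx hy xi yj m ubar c : ℝ)
    (hhx : 0 < hx) (hhy : 0 < hy) (hm : m ≤ ubar)
    (p : ℝ → ℝ → ℝ)
    (hp : ∀ x y, p x y = ubar + (ubar - m + c/2)*(x - xi)/hx
      + (ubar - m - c/2)*(y - yj)/hy) :
    ((1/(hx*hy)) *
      ∫ x in (xi - hx/2)..(xi + hx/2), ∫ y in (yj - hy/2)..(yj + hy/2), p x y)
      = ubar ∧
    p (xi - hx/2) (yj - hy/2) = m ∧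
    p (xi + hx/2) (yj - hy/2) - p (xi - hx/2) (yj + hy/2) = c ∧
    (|c| ≤ 2*(ubar - m) →
      ∀ x ∈ Set.Icc (xi - hx/2) (xi + hx/2), ∀ y ∈ Set.Icc (yj - hy/2) (yj + hy/2),
        m ≤ p x y) := by
  have hx0 := hhx.ne'
  have hy0 := hhy.ne'
  refine ⟨?_, ?_, ?_, ?_⟩
  · have hin : ∀ x, (∫ y in (yj - hy/2)..(yj + hy/2), p x y)
        = hy*ubar + hy*(ubar - m + c/2)*(x - xi)/hx := by
      intro x
      have : (fun y => p x y) = fun y =>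
          (ubar + (ubar - m + c/2)*(x - xi)/hx - (ubar - m - c/2)*yj/hy)
          + ((ubar - m - c/2)/hy)*y := by
        funext y; rw [hp]; field_simp; ring
      rw [this, int_affine]
      field_simp
      ring
    simp only [hin]
    have : (fun x => hy*ubar + hy*(ubar - m + c/2)*(x - xi)/hx)
        = fun x => (hy*ubar - hy*(ubar - m + c/2)*xi/hx)
          + (hy*(ubar - m + c/2)/hx)*x := by
      funext x; field_simp; ring
    rw [this, int_affine]
    field_simp
    ring
  · rw [hp]; field_simp; ring
  · rw [hp, hp]; field_simp; ring
  · intro hc x hxm y hym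
    rw [hp]
    have hA : 0 ≤ ubar - m + c/2 := by
      have := abs_le.mp hc; linarith [this.1]
    have hB : 0 ≤ ubar - m - c/2 := by
      have := abs_le.mp hc; linarith [this.2]
    have h1 : -((ubar - m + c/2)/2) ≤ (ubar - m + c/2)*(x - xi)/hx := by
      rw [le_div_iff₀ hhx]
      nlinarith [hxm.1, mul_le_mul_of_nonneg_left (by linarith [hxm.1] : -(hx/2) ≤ x - xi) hA]
    have h2 : -((ubar - m - c/2)/2) ≤ (ubar - m - c/2)*(y - yj)/hy := by
      rw [le_div_iff₀ hhy]
      nlinarith [mul_le_mul_of_nonneg_left (by linarith [hym.1] : -(hy/2) ≤ y - yj) hB]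
    linarith
end
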